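/- Let K be an algebraically closed field of characteristic 0, let d ≥ 2, and let W_d be the K-vector space of binary forms of degree d in x, y. Let V ⊆ W_d be a K-linear subspace such that ℓ^d ∉ V for every linear form ℓ (i.e. the projectivization of V is disjoint from the rational normal curve). Then there exist d pairwise non-proportional linear forms ℓ₁, …, ℓ_d such that V ⊆ span_K{ℓ₁^d, …, ℓ_d^d}. -/

import Mathlib

open MvPolynomial Submodule

noncomputable section

/-- A linear form: a nonzero binary (i.e. two-variable) form of degree `1`. -/
def IsLinForm {K : Type*} [CommSemiring K] (l : MvPolynomial (Fin 2) K) : Prop :=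
  l ≠ 0 ∧ l.IsHomogeneous 1

/-!
A functional `φ` on binary forms of degree `d` restricts along the affine chart `t ↦ (x + t y)^d`
of the rational normal curve to a polynomial `curvePoly d φ` of degree `≤ d` whose `t^d`
coefficient is `φ (y^d)`. Since `V` misses the curve, the functionals vanishing on `V` have no
common zero on it, and one of them is nonzero at `y^d`. A Bertini-type argument (a double root of
a member `p + t q` of a pencil without base points is a root of the Wronskian of `p` and `q`)
yields such a `φ` whose restriction has degree `d` and `d` simple roots `tᵢ`. The powers
`(x + tᵢ y)^d` are linearly independent (Vandermonde), so they span the `d`-dimensional hyperplane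
`ker φ` of `W_d`, which contains `V`.
-/

namespace Polynomial

open Polynomial

variable {K : Type*} [Field K]

theorem linearIndependent_X_add_C_pow [CharZero K] {n d : ℕ} (hn : n ≤ d + 1) {s : Fin n → K}
    (hs : Function.Injective s) : LinearIndependent K fun i => (X + C (s i)) ^ d := by
  rw [Fintype.linearIndependent_iff]
  intro g hg
  refine congrFun (Matrix.eq_zero_of_forall_pow_sum_mul_pow_eq_zero hs fun k => ?_)
  have hk : (k : ℕ) ≤ d := by omega
  have hcoeff := congrArg (coeff · (d - k)) hg
  simp only [finsetSum_coeff, coeff_smul, coeff_X_add_C_pow, Nat.sub_sub_self hk, smul_eq_mul,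
    coeff_zero, ← mul_assoc, ← Finset.sum_mul] at hcoeff
  exact (mul_eq_zero.mp hcoeff).resolve_right
    (Nat.cast_ne_zero.mpr (Nat.choose_pos (by omega)).ne')

theorem exists_forall_eval_ne_zero [Infinite K] (P : Submodule K K[X]) (S : Finset K)
    (h : ∀ s ∈ S, ∃ p ∈ P, p.eval s ≠ 0) : ∃ p ∈ P, ∀ s ∈ S, p.eval s ≠ 0 := by
  by_contra! hP
  obtain ⟨s, hs⟩ := Subspace.exists_eq_top_of_iUnion_eq_univ
    (p := fun s : S => LinearMap.ker ((leval (s : K)).comp P.subtype)) <| by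
      ext ⟨p, hp⟩
      simpa using hP p hp
  obtain ⟨p, hp, hps⟩ := h s s.2
  have : (⟨p, hp⟩ : P) ∈ LinearMap.ker ((leval (s : K)).comp P.subtype) := hs ▸ trivial
  exact hps (by simpa using this)

theorem eventually_cofinite_separable_add_smul [IsAlgClosed K] [CharZero K] {p q : K[X]}
    (hpq : IsCoprime p q) (hp : 0 < p.natDegree) :
    ∀ᶠ t : K in Filter.cofinite, (p + t • q).Separable := by
  have hW : wronskian p q ≠ 0 := fun h =>
    hp.ne' (derivative_eq_zero.mp (hpq.wronskian_eq_zero_iff.mp h).1)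
  rw [Filter.eventually_cofinite]
  refine ((finite_setOfPred_isRoot hW).image fun a => -p.eval a / q.eval a).subset fun t ht => ?_
  rw [Set.mem_ofPred_eq, Separable, isCoprime_iff_aeval_ne_zero_of_isAlgClosed K K] at ht
  push Not at ht
  obtain ⟨a, hpa, hpa'⟩ := ht
  simp only [coe_aeval_eq_eval, eval_add, eval_smul, derivative_add, derivative_smul,
    smul_eq_mul] at hpa hpa'
  have hqa : q.eval a ≠ 0 := fun hqa => by
    have := (isCoprime_iff_aeval_ne_zero_of_isAlgClosed K K p q).mp hpq a
    simp_all
  refine ⟨a, ?_, by rw [div_eq_iff hqa]; linear_combination -hpa⟩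
  rw [Set.mem_ofPred_eq, IsRoot.def, wronskian, eval_sub, eval_mul, eval_mul]
  linear_combination (derivative q).eval a * hpa - q.eval a * hpa'

theorem exists_mem_coeff_ne_zero_separable [IsAlgClosed K] [CharZero K] {P : Submodule K K[X]}
    {d : ℕ} (hd : 0 < d) (hlead : ∃ p ∈ P, p.coeff d ≠ 0) (hfree : ∀ a, ∃ p ∈ P, p.eval a ≠ 0) :
    ∃ p ∈ P, p.coeff d ≠ 0 ∧ p.Separable := by
  classical
  obtain ⟨p, hpP, hpd⟩ := hlead
  have hp0 : p ≠ 0 := fun h => hpd (by simp [h])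
  obtain ⟨q, hqP, hq⟩ := exists_forall_eval_ne_zero P p.roots.toFinset fun a _ => hfree a
  have hpq : IsCoprime p q := by
    refine (isCoprime_iff_aeval_ne_zero_of_isAlgClosed K K p q).mpr fun a => ?_
    by_cases hpa : p.eval a = 0
    · exact Or.inr (hq a (by simpa [hp0] using hpa))
    · exact Or.inl hpa
  have hcoeff : ∀ᶠ t : K in Filter.cofinite, (p + t • q).coeff d ≠ 0 := by
    rw [Filter.eventually_cofinite]
    refine (Set.finite_singleton (-p.coeff d / q.coeff d)).subset fun t ht => ?_
    simp only [Set.mem_ofPred_eq, coeff_add, coeff_smul, smul_eq_mul, not_not] at ht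
    have hqd : q.coeff d ≠ 0 := fun h => hpd (by simpa [h] using ht)
    rw [Set.mem_singleton_iff, eq_div_iff hqd]
    linear_combination ht
  obtain ⟨t, hsep, ht⟩ :=
    ((eventually_cofinite_separable_add_smul hpq (hd.trans_le (le_natDegree_of_ne_zero hpd))).and
      hcoeff).exists
  exact ⟨p + t • q, P.add_mem hpP (P.smul_mem t hqP), ht, hsep⟩

theorem Separable.exists_injective_isRoot [IsAlgClosed K] {p : K[X]} {n : ℕ} (hp : p.Separable)
    (hn : p.natDegree = n) : ∃ s : Fin n → K, Function.Injective s ∧ ∀ i, p.IsRoot (s i) := by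
  classical
  subst hn
  have hcard := card_rootSet_eq_natDegree (K := K) hp (IsAlgClosed.splits _)
  let e := Fintype.equivFinOfCardEq hcard
  refine ⟨fun i => e.symm i, Subtype.val_injective.comp e.symm.injective, fun i => ?_⟩
  have := (e.symm i).2
  rw [mem_rootSet] at this
  simpa using this.2

end Polynomial

theorem Submodule.exists_mem_dualAnnihilator_apply_ne_zero {K M : Type*} [Field K] [AddCommGroup M]
    [Module K M] {V : Submodule K M} {v : M} (hv : v ∉ V) :
    ∃ φ ∈ V.dualAnnihilator, φ v ≠ 0 := by
  by_contra! h
  exact hv ((Subspace.forall_mem_dualAnnihilator_apply_eq_zero_iff V v).mp h)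

theorem Submodule.eq_of_le_of_lt_of_finrank_le_succ {K M : Type*} [Field K] [AddCommGroup M]
    [Module K M] {S N W : Submodule K M} [FiniteDimensional K W] (hSN : S ≤ N) (hNW : N < W)
    (h : Module.finrank K W ≤ Module.finrank K S + 1) : S = N :=
  have := Submodule.finiteDimensional_of_le hNW.le
  eq_of_le_of_finrank_le hSN (by have := Submodule.finrank_lt_finrank_of_lt hNW; omega)

section BinaryForms

variable {K : Type*} [Field K]

def linForm (t : K) : MvPolynomial (Fin 2) K :=
  X 0 + C t * X 1

theorem isLinForm_X_one : IsLinForm (X 1 : MvPolynomial (Fin 2) K) :=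
  ⟨X_ne_zero 1, isHomogeneous_X K 1⟩

theorem isLinForm_linForm (t : K) : IsLinForm (linForm t) := by
  refine ⟨fun h => by simpa [linForm] using congrArg (eval ![1, 0]) h, ?_⟩
  simpa [linForm] using
    (isHomogeneous_X K 0).add ((isHomogeneous_C _ t).mul (isHomogeneous_X K 1))

theorem linForm_ne_smul_linForm {s t : K} (hst : s ≠ t) (c : K) : linForm s ≠ c • linForm t := by
  intro h
  have h₀ := congrArg (eval ![1, 0]) h
  have h₁ := congrArg (eval ![0, 1]) h
  simp [linForm] at h₀ h₁
  exact hst (by rw [h₁, ← h₀, one_mul])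

theorem linForm_pow_mem_homogeneousSubmodule (t : K) (d : ℕ) :
    linForm t ^ d ∈ homogeneousSubmodule (Fin 2) K d := by
  simpa using (isLinForm_linForm t).2.pow d

theorem aeval_linForm (t : K) :
    aeval ![Polynomial.X, 1] (linForm t) = Polynomial.X + Polynomial.C t := by
  simp [linForm]

theorem linearIndependent_linForm_pow [CharZero K] {n d : ℕ} (hn : n ≤ d + 1) {s : Fin n → K}
    (hs : Function.Injective s) : LinearIndependent K fun i => linForm (s i) ^ d := by
  have hcomp : (aeval ![Polynomial.X, 1]).toLinearMap ∘ (fun i => linForm (s i) ^ d) =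
      fun i => (Polynomial.X + Polynomial.C (s i)) ^ d := by
    funext i
    simp [aeval_linForm]
  exact .of_comp _ (hcomp ▸ Polynomial.linearIndependent_X_add_C_pow hn hs)

theorem homogeneousSubmodule_fin_two_le_span (d : ℕ) :
    homogeneousSubmodule (Fin 2) K d ≤
      span K (Set.range fun i : Fin (d + 1) => X 0 ^ (d - i) * X 1 ^ (i : ℕ)) := by
  rw [homogeneousSubmodule_eq_finsupp_supported, AddMonoidAlgebra.supported_eq_span_single,
    span_le]
  rintro _ ⟨m, hm, rfl⟩
  rw [Set.mem_ofPred_eq, Finsupp.degree_eq_sum, Fin.sum_univ_two] at hm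
  refine subset_span ⟨⟨m 1, by omega⟩, ?_⟩
  dsimp only
  rw [show d - m 1 = m 0 by omega, single_eq_monomial, monomial_eq,
    Finsupp.prod_fintype _ _ (by simp), Fin.prod_univ_two, C_1, one_mul]

theorem finrank_homogeneousSubmodule_fin_two_le (d : ℕ) :
    Module.finrank K (homogeneousSubmodule (Fin 2) K d) ≤ d + 1 :=
  have := FiniteDimensional.span_of_finite K (Set.finite_range
    fun i : Fin (d + 1) => (X 0 ^ (d - i) * X 1 ^ (i : ℕ) : MvPolynomial (Fin 2) K))
  (Submodule.finrank_mono (homogeneousSubmodule_fin_two_le_span d)).trans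
    ((finrank_range_le_card _).trans_eq (Fintype.card_fin _))

def curvePoly (d : ℕ) : Module.Dual K (MvPolynomial (Fin 2) K) →ₗ[K] Polynomial K :=
  ∑ m ∈ Finset.range (d + 1),
    (Polynomial.monomial m).comp ((d.choose m : K) • Module.Dual.eval K _ (X 0 ^ (d - m) * X 1 ^ m))

theorem curvePoly_apply (d : ℕ) (φ : Module.Dual K (MvPolynomial (Fin 2) K)) :
    curvePoly d φ = ∑ m ∈ Finset.range (d + 1),
      Polynomial.monomial m ((d.choose m : K) * φ (X 0 ^ (d - m) * X 1 ^ m)) := by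
  simp [curvePoly]

theorem eval_curvePoly (d : ℕ) (φ : Module.Dual K (MvPolynomial (Fin 2) K)) (t : K) :
    (curvePoly d φ).eval t = φ (linForm t ^ d) := by
  rw [curvePoly_apply, Polynomial.eval_finsetSum, linForm, add_comm (X 0), add_pow, map_sum]
  refine Finset.sum_congr rfl fun m _ => ?_
  have hterm : (C t * X 1) ^ m * X 0 ^ (d - m) * (d.choose m : MvPolynomial (Fin 2) K) =
      ((d.choose m : K) * t ^ m) • (X 0 ^ (d - m) * X 1 ^ m) := by
    rw [smul_eq_C_mul, C_mul, C_pow, map_natCast]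
    ring
  rw [Polynomial.eval_monomial, hterm, map_smul, smul_eq_mul]
  ring

theorem coeff_curvePoly_self (d : ℕ) (φ : Module.Dual K (MvPolynomial (Fin 2) K)) :
    (curvePoly d φ).coeff d = φ (X 1 ^ d) := by
  simp [curvePoly_apply, Polynomial.finsetSum_coeff, Polynomial.coeff_monomial]

theorem natDegree_curvePoly_le (d : ℕ) (φ : Module.Dual K (MvPolynomial (Fin 2) K)) :
    (curvePoly d φ).natDegree ≤ d := by
  rw [curvePoly_apply]
  refine Polynomial.natDegree_sum_le_of_forall_le _ _ fun m hm => ?_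
  exact (Polynomial.natDegree_monomial_le _).trans (Nat.lt_succ_iff.mp (Finset.mem_range.mp hm))

theorem exists_mem_dualAnnihilator_separable_curvePoly [IsAlgClosed K] [CharZero K] {d : ℕ}
    (hd : 0 < d) {V : Submodule K (MvPolynomial (Fin 2) K)} (hV₀ : X 1 ^ d ∉ V)
    (hV : ∀ t, linForm t ^ d ∉ V) :
    ∃ φ ∈ V.dualAnnihilator, φ (X 1 ^ d) ≠ 0 ∧ (curvePoly d φ).Separable := by
  have hlead : ∃ p ∈ V.dualAnnihilator.map (curvePoly d), p.coeff d ≠ 0 := by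
    obtain ⟨φ, hφV, hφ⟩ := exists_mem_dualAnnihilator_apply_ne_zero hV₀
    exact ⟨_, mem_map_of_mem hφV, by rwa [coeff_curvePoly_self]⟩
  have hfree : ∀ t, ∃ p ∈ V.dualAnnihilator.map (curvePoly d), p.eval t ≠ 0 := fun t => by
    obtain ⟨φ, hφV, hφ⟩ := exists_mem_dualAnnihilator_apply_ne_zero (hV t)
    exact ⟨_, mem_map_of_mem hφV, by rwa [eval_curvePoly]⟩
  obtain ⟨_, ⟨φ, hφV, rfl⟩, hφ, hsep⟩ :=
    Polynomial.exists_mem_coeff_ne_zero_separable hd hlead hfree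
  exact ⟨φ, hφV, by rwa [coeff_curvePoly_self] at hφ, hsep⟩

theorem le_span_linForm_pow [CharZero K] {d : ℕ} {V : Submodule K (MvPolynomial (Fin 2) K)}
    (hVW : V ≤ homogeneousSubmodule (Fin 2) K d) {φ : Module.Dual K (MvPolynomial (Fin 2) K)}
    (hφV : φ ∈ V.dualAnnihilator) (hφ : φ (X 1 ^ d) ≠ 0) {s : Fin d → K}
    (hs : Function.Injective s) (hroot : ∀ i, (curvePoly d φ).IsRoot (s i)) :
    V ≤ span K (Set.range fun i => linForm (s i) ^ d) := by
  have : FiniteDimensional K (homogeneousSubmodule (Fin 2) K d) :=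
    Module.Finite.iff_fg.mpr (homogeneousSubmodule_fg _ _ d)
  have hspan : span K (Set.range fun i => linForm (s i) ^ d) ≤
      homogeneousSubmodule (Fin 2) K d ⊓ LinearMap.ker φ := by
    rw [span_le]
    rintro _ ⟨i, rfl⟩
    exact ⟨linForm_pow_mem_homogeneousSubmodule _ _, by simpa [← eval_curvePoly] using hroot i⟩
  have hker : homogeneousSubmodule (Fin 2) K d ⊓ LinearMap.ker φ <
      homogeneousSubmodule (Fin 2) K d :=
    SetLike.lt_iff_le_and_exists.mpr
      ⟨inf_le_left, X 1 ^ d, isHomogeneous_X_pow 1 d, fun h => hφ h.2⟩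
  rw [Submodule.eq_of_le_of_lt_of_finrank_le_succ hspan hker ?_]
  · exact le_inf hVW fun v hv => (mem_dualAnnihilator φ).mp hφV v hv
  · rw [finrank_span_eq_card (linearIndependent_linForm_pow (Nat.le_succ d) hs), Fintype.card_fin]
    exact finrank_homogeneousSubmodule_fin_two_le d

end BinaryForms

/-- Proposition 3.1 of the paper applied to the rational normal curve,
`m = 1`, `n = d`: if `V ⊆ W_d` is a linear subspace containing no `d`-th power of a linear
form (so `ℙ(V)` is disjoint from the rational normal curve), then `V` is contained in the span
of `d` pairwise non-proportional `d`-th powers of linear forms, i.e. `R_X(V) ≤ n + 1 − m`. -/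
theorem subspace_le_span_of_d_powers
    {K : Type*} [Field K] [IsAlgClosed K] [CharZero K] (d : ℕ) (hd : 2 ≤ d)
    (V : Submodule K (MvPolynomial (Fin 2) K))
    (hVW : V ≤ homogeneousSubmodule (Fin 2) K d)
    (hVX : ∀ l : MvPolynomial (Fin 2) K, IsLinForm l → l ^ d ∉ V) :
    ∃ l : Fin d → MvPolynomial (Fin 2) K, (∀ i, IsLinForm (l i)) ∧
      (∀ i j, i ≠ j → ∀ c : K, l i ≠ c • l j) ∧
      V ≤ span K (Set.range fun i => l i ^ d) := by
  obtain ⟨φ, hφV, hφ, hsep⟩ := exists_mem_dualAnnihilator_separable_curvePoly (by omega)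
    (hVX _ isLinForm_X_one) fun t => hVX _ (isLinForm_linForm t)
  have hdeg : (curvePoly d φ).natDegree = d :=
    Polynomial.natDegree_eq_of_le_of_coeff_ne_zero (natDegree_curvePoly_le d φ)
      (by rwa [coeff_curvePoly_self])
  obtain ⟨s, hs, hroot⟩ := hsep.exists_injective_isRoot hdeg
  exact ⟨fun i => linForm (s i), fun i => isLinForm_linForm _,
    fun i j hij => linForm_ne_smul_linForm (hs.ne hij), le_span_linForm_pow hVW hφV hφ hs hroot⟩
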